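/- Fix t > 0 and a nonnegative kernel F(t,·) on (0,t) with weighted operator I[f] = ∫₀ᵗ τ^k F(t,τ) f(τ) dτ. If f and g are asynchronous on [0,∞) (i.e. (f(u)-f(v))(g(u)-g(v)) ≤ 0 for all u,v ≥ 0) and x, y : [0,∞) → [0,∞) are nonnegative, then the reversed inequality holds: I[x]·I[y·f·g] + I[y]·I[x·f·g] ≤ I[x·f]·I[y·g] + I[y·f]·I[x·g]. -/

import Mathlib

open MeasureTheory

/-- Weighted integral operator `I[φ] = ∫₀ᵗ τ^k F(τ) φ(τ) dτ`. -/
noncomputable def wInt (k t : ℝ) (F φ : ℝ → ℝ) : ℝ :=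
  ∫ τ in (0:ℝ)..t, τ ^ k * F τ * φ τ

/-- Integrability of the weighted integrand. -/
def wIntble (k t : ℝ) (F φ : ℝ → ℝ) : Prop :=
  IntervalIntegrable (fun τ => τ ^ k * F τ * φ τ) volume 0 t

/-!
Integrating `w(u) x(u) w(v) y(v) (f(u) - f(v)) (g(u) - g(v)) ≤ 0` over `u` and `v` and expanding
the product gives the inequality. The double integral is computed as an iterated one, first in `v`
for fixed `u` and then in `u`, so only the eight one-variable integrals have to exist.
-/

section WeightedChebyshev

variable {X : Type*} [MeasurableSpace X] {μ : Measure X} {w f g x : X → ℝ}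

theorem integral_mul_mul_bilinear_eq (α β γ δ : ℝ)
    (hx : Integrable (fun u => w u * x u) μ)
    (hxf : Integrable (fun u => w u * (x u * f u)) μ)
    (hxg : Integrable (fun u => w u * (x u * g u)) μ)
    (hxfg : Integrable (fun u => w u * (x u * f u * g u)) μ) :
    ∫ u, w u * x u * (α * (f u * g u) - β * f u - γ * g u + δ) ∂μ =
      α * ∫ u, w u * (x u * f u * g u) ∂μ - β * ∫ u, w u * (x u * f u) ∂μ -
        γ * ∫ u, w u * (x u * g u) ∂μ + δ * ∫ u, w u * x u ∂μ := by
  have hpoint : ∀ u, w u * x u * (α * (f u * g u) - β * f u - γ * g u + δ) =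
      α * (w u * (x u * f u * g u)) - β * (w u * (x u * f u)) -
        γ * (w u * (x u * g u)) + δ * (w u * x u) := fun u => by ring
  simp only [hpoint]
  rw [integral_add (by fun_prop) (by fun_prop), integral_sub (by fun_prop) (by fun_prop),
    integral_sub (by fun_prop) (by fun_prop)]
  simp only [integral_const_mul]

theorem AntivaryOn.integral_mul_add_integral_mul_le {y : X → ℝ} {s : Set X}
    (hfg : AntivaryOn f g s) (hs : ∀ᵐ u ∂μ, u ∈ s)
    (hw : 0 ≤ᵐ[μ] w) (hx₀ : 0 ≤ᵐ[μ] x) (hy₀ : 0 ≤ᵐ[μ] y)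
    (hx : Integrable (fun u => w u * x u) μ)
    (hxf : Integrable (fun u => w u * (x u * f u)) μ)
    (hxg : Integrable (fun u => w u * (x u * g u)) μ)
    (hxfg : Integrable (fun u => w u * (x u * f u * g u)) μ)
    (hy : Integrable (fun u => w u * y u) μ)
    (hyf : Integrable (fun u => w u * (y u * f u)) μ)
    (hyg : Integrable (fun u => w u * (y u * g u)) μ)
    (hyfg : Integrable (fun u => w u * (y u * f u * g u)) μ) :
    (∫ u, w u * x u ∂μ) * (∫ u, w u * (y u * f u * g u) ∂μ) +
        (∫ u, w u * y u ∂μ) * (∫ u, w u * (x u * f u * g u) ∂μ) ≤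
      (∫ u, w u * (x u * f u) ∂μ) * (∫ u, w u * (y u * g u) ∂μ) +
        (∫ u, w u * (y u * f u) ∂μ) * (∫ u, w u * (x u * g u) ∂μ) := by
  have inner_eq : ∀ u, ∫ v, w v * y v * ((f u - f v) * (g u - g v)) ∂μ =
      (∫ v, w v * y v ∂μ) * (f u * g u) - (∫ v, w v * (y v * g v) ∂μ) * f u -
        (∫ v, w v * (y v * f v) ∂μ) * g u + ∫ v, w v * (y v * f v * g v) ∂μ := fun u => by
    have hpoint : ∀ v, (f u - f v) * (g u - g v) =
        1 * (f v * g v) - g u * f v - f u * g v + f u * g u := fun v => by ring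
    simp only [hpoint, integral_mul_mul_bilinear_eq _ _ _ _ hy hyf hyg hyfg]
    ring
  have inner_nonpos : ∀ᵐ u ∂μ, ∫ v, w v * y v * ((f u - f v) * (g u - g v)) ∂μ ≤ 0 := by
    filter_upwards [hs] with u hu
    refine integral_nonpos_of_ae ?_
    filter_upwards [hs, hw, hy₀] with v hv hwv hyv
    exact mul_nonpos_of_nonneg_of_nonpos (mul_nonneg hwv hyv) (hfg.sub_mul_sub_nonpos hv hu)
  have outer_nonpos : ∫ u, w u * x u * ∫ v, w v * y v * ((f u - f v) * (g u - g v)) ∂μ ∂μ ≤ 0 :=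
    integral_nonpos_of_ae <| by
      filter_upwards [hw, hx₀, inner_nonpos] with u hwu hxu hu
      exact mul_nonpos_of_nonneg_of_nonpos (mul_nonneg hwu hxu) hu
  simp only [inner_eq, integral_mul_mul_bilinear_eq _ _ _ _ hx hxf hxg hxfg] at outer_nonpos
  linarith

end WeightedChebyshev

theorem wInt_eq_setIntegral_Ioo {k t : ℝ} (ht : 0 ≤ t) (F φ : ℝ → ℝ) :
    wInt k t F φ = ∫ τ in Set.Ioo 0 t, τ ^ k * F τ * φ τ := by
  rw [wInt, intervalIntegral.integral_of_le ht, integral_Ioc_eq_integral_Ioo]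

theorem wIntble.integrableOn_Ioo {k t : ℝ} {F φ : ℝ → ℝ} (ht : 0 ≤ t) (h : wIntble k t F φ) :
    IntegrableOn (fun τ => τ ^ k * F τ * φ τ) (Set.Ioo 0 t) :=
  (intervalIntegrable_iff_integrableOn_Ioo_of_le ht).1 h

theorem weighted_chebyshev_asynchronous_general (k t : ℝ) (ht : 0 < t)
    (F f g x y : ℝ → ℝ)
    (hF : ∀ τ ∈ Set.Ioo (0:ℝ) t, 0 ≤ F τ)
    (hasync : ∀ u v : ℝ, 0 ≤ u → 0 ≤ v → (f u - f v) * (g u - g v) ≤ 0)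
    (hx : ∀ u : ℝ, 0 ≤ u → 0 ≤ x u) (hy : ∀ u : ℝ, 0 ≤ u → 0 ≤ y u)
    (hint : ∀ φ ∈ [x, y, fun τ => y τ * f τ * g τ, fun τ => x τ * f τ * g τ,
        fun τ => x τ * f τ, fun τ => y τ * g τ, fun τ => y τ * f τ,
        fun τ => x τ * g τ], wIntble k t F φ) :
    wInt k t F x * wInt k t F (fun τ => y τ * f τ * g τ) +
      wInt k t F y * wInt k t F (fun τ => x τ * f τ * g τ) ≤
    wInt k t F (fun τ => x τ * f τ) * wInt k t F (fun τ => y τ * g τ) +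
      wInt k t F (fun τ => y τ * f τ) * wInt k t F (fun τ => x τ * g τ) := by
  simp only [List.mem_cons, List.not_mem_nil, or_false, forall_eq_or_imp, forall_eq] at hint
  obtain ⟨hix, hiy, hiyfg, hixfg, hixf, hiyg, hiyf, hixg⟩ := hint
  have hfg : AntivaryOn f g (Set.Ici 0) :=
    antivaryOn_iff_forall_mul_nonpos.2 fun u hu v hv => hasync v u hv hu
  have on_Ioo : ∀ {P : ℝ → Prop}, (∀ τ ∈ Set.Ioo 0 t, P τ) →
      ∀ᵐ τ ∂volume.restrict (Set.Ioo 0 t), P τ :=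
    ae_restrict_of_forall_mem measurableSet_Ioo
  simp only [wInt_eq_setIntegral_Ioo ht.le]
  exact hfg.integral_mul_add_integral_mul_le (w := fun τ => τ ^ k * F τ)
    (on_Ioo fun τ hτ => hτ.1.le)
    (on_Ioo fun τ hτ => mul_nonneg (Real.rpow_nonneg hτ.1.le k) (hF τ hτ))
    (on_Ioo fun τ hτ => hx τ hτ.1.le) (on_Ioo fun τ hτ => hy τ hτ.1.le)
    (hix.integrableOn_Ioo ht.le) (hixf.integrableOn_Ioo ht.le) (hixg.integrableOn_Ioo ht.le)
    (hixfg.integrableOn_Ioo ht.le) (hiy.integrableOn_Ioo ht.le) (hiyf.integrableOn_Ioo ht.le)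
    (hiyg.integrableOn_Ioo ht.le) (hiyfg.integrableOn_Ioo ht.le)

theorem weighted_chebyshev_asynchronous (k t : ℝ) (hk : 0 ≤ k) (ht : 0 < t)
    (F f g x y : ℝ → ℝ)
    (hF : ∀ τ ∈ Set.Ioo (0:ℝ) t, 0 ≤ F τ)
    (hasync : ∀ u v : ℝ, 0 ≤ u → 0 ≤ v → (f u - f v) * (g u - g v) ≤ 0)
    (hx : ∀ u : ℝ, 0 ≤ u → 0 ≤ x u) (hy : ∀ u : ℝ, 0 ≤ u → 0 ≤ y u)
    (hint : ∀ φ ∈ [x, y, fun τ => y τ * f τ * g τ, fun τ => x τ * f τ * g τ,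
        fun τ => x τ * f τ, fun τ => y τ * g τ, fun τ => y τ * f τ,
        fun τ => x τ * g τ], wIntble k t F φ) :
    wInt k t F x * wInt k t F (fun τ => y τ * f τ * g τ) +
      wInt k t F y * wInt k t F (fun τ => x τ * f τ * g τ) ≤
    wInt k t F (fun τ => x τ * f τ) * wInt k t F (fun τ => y τ * g τ) +
      wInt k t F (fun τ => y τ * f τ) * wInt k t F (fun τ => x τ * g τ) :=
  weighted_chebyshev_asynchronous_general k t ht F f g x y hF hasync hx hy hint
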